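/- arXiv:2407.05012 — 2 statements merged into one kernel-verified Lean document; each statement's English description precedes it below -/
import Mathlib

section
/- Let φ̃ : ℝ → ℝ be a smooth function with compact support contained in {ξ : 1/4 ≤ |ξ| ≤ 4}. Then there exists a constant C > 0 (depending only on φ̃) such that for every α ∈ ℝ and every j ∈ ℤ, ∫_ℝ |𝓕⁻¹[ξ ↦ φ̃(ξ)·(α² + 2^{2j}·ξ²)^(−1/2)](x)| dx ≤ C·(α² + 2^{2j})^(−1/2). -/
open MeasureTheory Real Complex
open scoped FourierTransform ENNReal
noncomputable section
namespace Statement4Aux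

lemma rpow_sixteen (n : ℕ) : (16:ℝ) ^ ((n:ℝ)/2) = 2 ^ (2*n) := by
  have h16 : (16:ℝ) = (2:ℝ) ^ (4:ℕ) := by norm_num
  rw [h16, ← Real.rpow_natCast (2:ℝ) 4, ← Real.rpow_mul (by norm_num : (0:ℝ) ≤ 2),
    show ((4:ℕ):ℝ) * ((n:ℝ)/2) = ((2*n : ℕ) : ℝ) by push_cast; ring, Real.rpow_natCast]

lemma hasDerivAt_Q (D c : ℝ) (ξ : ℝ) :
    HasDerivAt (fun x : ℝ => D + c * x ^ 2) (2 * c * ξ) ξ := by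
  have := ((hasDerivAt_pow 2 ξ).const_mul c).const_add D
  refine this.congr_deriv ?_
  push_cast; ring

lemma hasDerivAt_H0 {D c : ℝ} {ξ : ℝ} (hQ : 0 < D + c * ξ ^ 2) :
    HasDerivAt (fun x : ℝ => (D + c * x ^ 2) ^ (-(1:ℝ)/2))
      (-(c * ξ) * (D + c * ξ ^ 2) ^ (-(3:ℝ)/2)) ξ := by
  have h := (hasDerivAt_Q D c ξ).rpow_const (p := -(1:ℝ)/2) (Or.inl hQ.ne')
  convert h using 1
  rw [show (-(1:ℝ)/2 - 1) = -(3:ℝ)/2 by norm_num]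
  ring

lemma hasDerivAt_H1 {D c : ℝ} {ξ : ℝ} (hQ : 0 < D + c * ξ ^ 2) :
    HasDerivAt (fun x : ℝ => -(c * x) * (D + c * x ^ 2) ^ (-(3:ℝ)/2))
      (-c * (D + c * ξ ^ 2) ^ (-(3:ℝ)/2)
        + 3 * c^2 * ξ^2 * (D + c * ξ ^ 2) ^ (-(5:ℝ)/2)) ξ := by
  have hf : HasDerivAt (fun x : ℝ => -(c * x)) (-c) ξ := by
    exact (((hasDerivAt_id ξ).const_mul c).neg).congr_deriv (by simp)
  have hg := (hasDerivAt_Q D c ξ).rpow_const (p := -(3:ℝ)/2) (Or.inl hQ.ne')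
  have h := hf.mul hg
  refine h.congr_deriv ?_
  rw [show (-(3:ℝ)/2 - 1) = -(5:ℝ)/2 by norm_num]
  ring

end Statement4Aux

namespace Statement4Aux

lemma Qbound {D c : ℝ} (hP : 0 < D + c) {ξ : ℝ} (hQP : (D+c)/16 ≤ D + c*ξ^2) (n : ℕ)
    {e M : ℝ} (he : -(n:ℝ)/2 = e) (hM : (2:ℝ)^(2*n) = M) :
    (D + c*ξ^2) ^ e ≤ M * (D+c) ^ e := by
  subst he hM
  have h1 : (D + c*ξ^2) ^ (-(n:ℝ)/2) ≤ ((D+c)/16) ^ (-(n:ℝ)/2) := by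
    apply Real.rpow_le_rpow_of_nonpos (by positivity) hQP
    have : (0:ℝ) ≤ (n:ℝ) := n.cast_nonneg
    linarith
  refine h1.trans (le_of_eq ?_)
  rw [Real.div_rpow hP.le (by norm_num : (0:ℝ) ≤ 16),
      show (-(n:ℝ)/2) = -((n:ℝ)/2) by ring,
      Real.rpow_neg (by norm_num : (0:ℝ) ≤ 16), rpow_sixteen, div_eq_mul_inv, inv_inv]
  ring

lemma P_mul {P : ℝ} (hP : 0 < P) : P * P ^ (-(3:ℝ)/2) = P ^ (-(1:ℝ)/2) := by
  nth_rewrite 1 [← Real.rpow_one P]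
  rw [← Real.rpow_add hP]; norm_num

lemma P_mul2 {P : ℝ} (hP : 0 < P) : P^2 * P ^ (-(5:ℝ)/2) = P ^ (-(1:ℝ)/2) := by
  rw [← Real.rpow_natCast P 2, ← Real.rpow_add hP]; norm_num

lemma bound_H0 {D c ξ : ℝ} (hD : 0 ≤ D) (hc : 0 < c) (hlo : 1/4 ≤ |ξ|) (hhi : |ξ| ≤ 4) :
    |(D + c * ξ^2) ^ (-(1:ℝ)/2)| ≤ 4 * (D + c) ^ (-(1:ℝ)/2) := by
  have hx2 : 1/16 ≤ ξ^2 := by nlinarith [_root_.sq_abs ξ, abs_nonneg ξ]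
  have hP : 0 < D + c := by positivity
  have hQP : (D+c)/16 ≤ D + c*ξ^2 := by nlinarith
  have hQ : 0 < D + c*ξ^2 := lt_of_lt_of_le (by positivity) hQP
  have h := Qbound hP hQP 1 (e := -(1:ℝ)/2) (M := 4) (by norm_num) (by norm_num)
  rw [_root_.abs_of_nonneg (Real.rpow_nonneg hQ.le _)]
  exact h

lemma bound_H1 {D c ξ : ℝ} (hD : 0 ≤ D) (hc : 0 < c) (hlo : 1/4 ≤ |ξ|) (hhi : |ξ| ≤ 4) :
    |(-(c * ξ)) * (D + c * ξ^2) ^ (-(3:ℝ)/2)| ≤ 256 * (D + c) ^ (-(1:ℝ)/2) := by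
  have hx2 : 1/16 ≤ ξ^2 := by nlinarith [_root_.sq_abs ξ, abs_nonneg ξ]
  have hP : 0 < D + c := by positivity
  have hQP : (D+c)/16 ≤ D + c*ξ^2 := by nlinarith
  have hQ : 0 < D + c*ξ^2 := lt_of_lt_of_le (by positivity) hQP
  have h3 := Qbound hP hQP 3 (e := -(3:ℝ)/2) (M := 64) (by norm_num) (by norm_num)
  have hQnn : 0 ≤ (D + c*ξ^2) ^ (-(3:ℝ)/2) := Real.rpow_nonneg hQ.le _
  have hcP : c * (D+c) ^ (-(3:ℝ)/2) ≤ (D+c) ^ (-(1:ℝ)/2) := by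
    calc c * (D+c) ^ (-(3:ℝ)/2) ≤ (D+c) * (D+c) ^ (-(3:ℝ)/2) :=
          mul_le_mul_of_nonneg_right (by linarith) (Real.rpow_nonneg hP.le _)
      _ = (D+c) ^ (-(1:ℝ)/2) := P_mul hP
  rw [_root_.abs_mul, _root_.abs_neg, _root_.abs_mul, _root_.abs_of_pos hc,
    _root_.abs_of_nonneg hQnn]
  calc c * |ξ| * (D + c*ξ^2) ^ (-(3:ℝ)/2)
      ≤ c * 4 * (D + c*ξ^2) ^ (-(3:ℝ)/2) :=
        mul_le_mul_of_nonneg_right (mul_le_mul_of_nonneg_left hhi hc.le) hQnn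
    _ ≤ c * 4 * (64 * (D+c) ^ (-(3:ℝ)/2)) := by
        apply mul_le_mul_of_nonneg_left h3 (by positivity)
    _ = 256 * (c * (D+c) ^ (-(3:ℝ)/2)) := by ring
    _ ≤ 256 * (D+c) ^ (-(1:ℝ)/2) := mul_le_mul_of_nonneg_left hcP (by norm_num)

lemma bound_H2 {D c ξ : ℝ} (hD : 0 ≤ D) (hc : 0 < c) (hlo : 1/4 ≤ |ξ|) (hhi : |ξ| ≤ 4) :
    |(-c * (D + c * ξ^2) ^ (-(3:ℝ)/2) + 3 * c^2 * ξ^2 * (D + c * ξ^2) ^ (-(5:ℝ)/2))|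
      ≤ 49216 * (D + c) ^ (-(1:ℝ)/2) := by
  have hx2 : 1/16 ≤ ξ^2 := by nlinarith [_root_.sq_abs ξ, abs_nonneg ξ]
  have hx16 : ξ^2 ≤ 16 := by nlinarith [_root_.sq_abs ξ, abs_nonneg ξ]
  have hP : 0 < D + c := by positivity
  have hQP : (D+c)/16 ≤ D + c*ξ^2 := by nlinarith
  have hQ : 0 < D + c*ξ^2 := lt_of_lt_of_le (by positivity) hQP
  have h3 := Qbound hP hQP 3 (e := -(3:ℝ)/2) (M := 64) (by norm_num) (by norm_num)
  have h5 := Qbound hP hQP 5 (e := -(5:ℝ)/2) (M := 1024) (by norm_num) (by norm_num)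
  have hQ3 : 0 ≤ (D + c*ξ^2) ^ (-(3:ℝ)/2) := Real.rpow_nonneg hQ.le _
  have hQ5 : 0 ≤ (D + c*ξ^2) ^ (-(5:ℝ)/2) := Real.rpow_nonneg hQ.le _
  have hcP : c * (D+c) ^ (-(3:ℝ)/2) ≤ (D+c) ^ (-(1:ℝ)/2) := by
    calc c * (D+c) ^ (-(3:ℝ)/2) ≤ (D+c) * (D+c) ^ (-(3:ℝ)/2) :=
          mul_le_mul_of_nonneg_right (by linarith) (Real.rpow_nonneg hP.le _)
      _ = (D+c) ^ (-(1:ℝ)/2) := P_mul hP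
  have hc2P : c^2 * (D+c) ^ (-(5:ℝ)/2) ≤ (D+c) ^ (-(1:ℝ)/2) := by
    calc c^2 * (D+c) ^ (-(5:ℝ)/2) ≤ (D+c)^2 * (D+c) ^ (-(5:ℝ)/2) :=
          mul_le_mul_of_nonneg_right (pow_le_pow_left₀ hc.le (by linarith) 2)
            (Real.rpow_nonneg hP.le _)
      _ = (D+c) ^ (-(1:ℝ)/2) := P_mul2 hP
  have habs : |(-c * (D + c * ξ^2) ^ (-(3:ℝ)/2) + 3 * c^2 * ξ^2 * (D + c * ξ^2) ^ (-(5:ℝ)/2))|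
      ≤ c * (D + c*ξ^2) ^ (-(3:ℝ)/2) + 3 * c^2 * ξ^2 * (D + c*ξ^2) ^ (-(5:ℝ)/2) := by
    refine (_root_.abs_add_le _ _).trans ?_
    have h1 : |(-c * (D + c * ξ^2) ^ (-(3:ℝ)/2))| = c * (D + c*ξ^2) ^ (-(3:ℝ)/2) := by
      rw [_root_.abs_mul, _root_.abs_neg, _root_.abs_of_pos hc, _root_.abs_of_nonneg hQ3]
    have h2 : |(3 * c^2 * ξ^2 * (D + c * ξ^2) ^ (-(5:ℝ)/2))|
        = 3 * c^2 * ξ^2 * (D + c*ξ^2) ^ (-(5:ℝ)/2) := by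
      rw [_root_.abs_of_nonneg (by positivity)]
    rw [h1, h2]
  refine habs.trans ?_
  have t1 : c * (D + c*ξ^2) ^ (-(3:ℝ)/2) ≤ 64 * (D+c) ^ (-(1:ℝ)/2) := by
    calc c * (D + c*ξ^2) ^ (-(3:ℝ)/2) ≤ c * (64 * (D+c) ^ (-(3:ℝ)/2)) :=
          mul_le_mul_of_nonneg_left h3 hc.le
      _ = 64 * (c * (D+c) ^ (-(3:ℝ)/2)) := by ring
      _ ≤ 64 * (D+c) ^ (-(1:ℝ)/2) := mul_le_mul_of_nonneg_left hcP (by norm_num)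
  have t2 : 3 * c^2 * ξ^2 * (D + c*ξ^2) ^ (-(5:ℝ)/2) ≤ 49152 * (D+c) ^ (-(1:ℝ)/2) := by
    calc 3 * c^2 * ξ^2 * (D + c*ξ^2) ^ (-(5:ℝ)/2)
        ≤ 3 * c^2 * 16 * (D + c*ξ^2) ^ (-(5:ℝ)/2) := by
          apply mul_le_mul_of_nonneg_right _ hQ5
          nlinarith [sq_nonneg c]
      _ ≤ 3 * c^2 * 16 * (1024 * (D+c) ^ (-(5:ℝ)/2)) :=
          mul_le_mul_of_nonneg_left h5 (by positivity)
      _ = 49152 * (c^2 * (D+c) ^ (-(5:ℝ)/2)) := by ring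
      _ ≤ 49152 * (D+c) ^ (-(1:ℝ)/2) := mul_le_mul_of_nonneg_left hc2P (by norm_num)
  linarith

end Statement4Aux
namespace Statement4Aux

set_option maxHeartbeats 1600000 in
theorem main_est (φ : ℝ → ℝ) (hsm : ContDiff ℝ (⊤ : ℕ∞) φ)
    (hsupp : Function.support φ ⊆ {ξ : ℝ | 1/4 ≤ |ξ| ∧ |ξ| ≤ 4})
    (B : ℝ) (hB1 : 1 ≤ B)
    (hBb0 : ∀ ξ, |φ ξ| ≤ B) (hBb1 : ∀ ξ, |deriv φ ξ| ≤ B)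
    (hBb2 : ∀ ξ, |deriv (deriv φ) ξ| ≤ B)
    (D c : ℝ) (hD : 0 ≤ D) (hc : 0 < c) :
    ∫⁻ x : ℝ, ‖𝓕⁻ (fun ξ : ℝ => ((φ ξ * (D + c * ξ ^ 2) ^ (-(1:ℝ)/2) : ℝ) : ℂ)) x‖₊
      ≤ ENNReal.ofReal ((397888 * B * π) * (D + c) ^ (-(1:ℝ)/2)) := by
  have hP : 0 < D + c := by positivity
  have hBpos : (0:ℝ) < B := lt_of_lt_of_le one_pos hB1
  have hrnn : (0:ℝ) ≤ (D + c) ^ (-(1:ℝ)/2) := Real.rpow_nonneg hP.le _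
  set S : Set ℝ := {ξ : ℝ | 1/4 ≤ |ξ| ∧ |ξ| ≤ 4} with hS_def
  have hS_closed : IsClosed S :=
    (isClosed_le continuous_const _root_.continuous_abs).inter
      (isClosed_le _root_.continuous_abs continuous_const)
  have hSIcc : S ⊆ Set.Icc (-4:ℝ) 4 := fun ξ hξ => Set.mem_Icc.mpr (abs_le.mp hξ.2)
  have hts : tsupport φ ⊆ S := closure_minimal hsupp hS_closed
  have hone : (1 : WithTop ℕ∞) ≤ ((⊤:ℕ∞):WithTop ℕ∞) := by exact_mod_cast (le_top : (1:ℕ∞) ≤ ⊤)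
  have hsm' : ContDiff ℝ (((⊤:ℕ∞)):WithTop ℕ∞) φ := hsm.of_le (by simp)
  have hφd : Differentiable ℝ φ := hsm'.differentiable (by simp)
  have hdφ_smooth : ContDiff ℝ (((⊤:ℕ∞)):WithTop ℕ∞) (deriv φ) :=
    (contDiff_infty_iff_deriv.mp hsm').2
  have hdφd : Differentiable ℝ (deriv φ) := hdφ_smooth.differentiable (by simp)
  have hφ0 : ∀ ξ, ξ ∉ S → φ ξ = 0 := fun ξ hξ => by
    by_contra h; exact hξ (hsupp (Function.mem_support.mpr h))
  have hdφ0 : ∀ ξ, ξ ∉ S → deriv φ ξ = 0 := fun ξ hξ => by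
    by_contra h; exact hξ (hts (support_deriv_subset (Function.mem_support.mpr h)))
  have hts' : tsupport (deriv φ) ⊆ S :=
    closure_minimal (fun ξ h => hts (support_deriv_subset h)) hS_closed
  have hd2φ0 : ∀ ξ, ξ ∉ S → deriv (deriv φ) ξ = 0 := fun ξ hξ => by
    by_contra h; exact hξ (hts' (support_deriv_subset (Function.mem_support.mpr h)))
  have hV : IsOpen {x : ℝ | |x| < 1/4} := isOpen_lt _root_.continuous_abs continuous_const
  have hVS : ∀ x : ℝ, |x| < 1/4 → x ∉ S := fun x hx hxS => absurd hxS.1 (not_le.mpr hx)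
  have hQpos : ∀ ξ : ℝ, 1/4 ≤ |ξ| → 0 < D + c * ξ^2 := by
    intro ξ hξ
    have : 1/16 ≤ ξ^2 := by nlinarith [_root_.sq_abs ξ, abs_nonneg ξ]
    nlinarith
  -- the three real functions
  set K0 : ℝ → ℝ := fun ξ => φ ξ * (D + c * ξ^2) ^ (-(1:ℝ)/2) with hK0_def
  set K1 : ℝ → ℝ := fun ξ => deriv φ ξ * (D + c * ξ^2) ^ (-(1:ℝ)/2)
      + φ ξ * (-(c * ξ) * (D + c * ξ^2) ^ (-(3:ℝ)/2)) with hK1_def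
  set K2 : ℝ → ℝ := fun ξ => deriv (deriv φ) ξ * (D + c * ξ^2) ^ (-(1:ℝ)/2)
      + 2 * deriv φ ξ * (-(c * ξ) * (D + c * ξ^2) ^ (-(3:ℝ)/2))
      + φ ξ * (-c * (D + c * ξ^2) ^ (-(3:ℝ)/2)
          + 3 * c^2 * ξ^2 * (D + c * ξ^2) ^ (-(5:ℝ)/2)) with hK2_def
  have hDK0 : ∀ ξ, HasDerivAt K0 (K1 ξ) ξ := by
    intro ξ
    rcases lt_or_ge |ξ| (1/4) with hlt | hge
    · have hev : K0 =ᶠ[nhds ξ] (fun _ => (0:ℝ)) := by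
        filter_upwards [hV.mem_nhds hlt] with y hy
        simp [hK0_def, hφ0 y (hVS y hy)]
      have h0 : HasDerivAt K0 0 ξ := (hasDerivAt_const ξ (0:ℝ)).congr_of_eventuallyEq hev
      have h1 : K1 ξ = 0 := by
        simp [hK1_def, hφ0 ξ (hVS ξ hlt), hdφ0 ξ (hVS ξ hlt)]
      rw [h1]; exact h0
    · have hQ := hQpos ξ hge
      exact (hφd ξ).hasDerivAt.mul (hasDerivAt_H0 hQ)
  have hDK1 : ∀ ξ, HasDerivAt K1 (K2 ξ) ξ := by
    intro ξ
    rcases lt_or_ge |ξ| (1/4) with hlt | hge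
    · have hev : K1 =ᶠ[nhds ξ] (fun _ => (0:ℝ)) := by
        filter_upwards [hV.mem_nhds hlt] with y hy
        simp [hK1_def, hφ0 y (hVS y hy), hdφ0 y (hVS y hy)]
      have h0 : HasDerivAt K1 0 ξ := (hasDerivAt_const ξ (0:ℝ)).congr_of_eventuallyEq hev
      have h2 : K2 ξ = 0 := by
        simp [hK2_def, hφ0 ξ (hVS ξ hlt), hdφ0 ξ (hVS ξ hlt), hd2φ0 ξ (hVS ξ hlt)]
      rw [h2]; exact h0
    · have hQ := hQpos ξ hge
      have hA := (hdφd ξ).hasDerivAt.mul (hasDerivAt_H0 hQ)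
      have hB' := (hφd ξ).hasDerivAt.mul (hasDerivAt_H1 hQ)
      refine (hA.add hB').congr_deriv ?_
      simp only [hK2_def]
      ring
  -- complex versions
  set g : ℝ → ℂ := fun ξ : ℝ => ((φ ξ * (D + c * ξ ^ 2) ^ (-(1:ℝ)/2) : ℝ) : ℂ) with hg_def
  set g1 : ℝ → ℂ := fun ξ => ((K1 ξ : ℝ) : ℂ) with hg1_def
  set g2 : ℝ → ℂ := fun ξ => ((K2 ξ : ℝ) : ℂ) with hg2_def
  have hgK : ∀ ξ, g ξ = ((K0 ξ : ℝ) : ℂ) := fun ξ => rfl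
  have hDg : ∀ ξ, HasDerivAt g ((K1 ξ : ℝ) : ℂ) ξ := fun ξ => (hDK0 ξ).ofReal_comp
  have hDg1 : ∀ ξ, HasDerivAt g1 ((K2 ξ : ℝ) : ℂ) ξ := fun ξ => (hDK1 ξ).ofReal_comp
  have hdiffg : Differentiable ℝ g := fun ξ => (hDg ξ).differentiableAt
  have hdiffg1 : Differentiable ℝ g1 := fun ξ => (hDg1 ξ).differentiableAt
  have hderivg : deriv g = g1 := funext fun ξ => (hDg ξ).deriv
  have hderivg1 : deriv g1 = g2 := funext fun ξ => (hDg1 ξ).deriv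
  -- pointwise bounds
  have hgb : ∀ ξ, ‖g ξ‖ ≤ Set.indicator (Set.Icc (-4:ℝ) 4)
      (fun _ => 4 * B * ((D + c) ^ (-(1:ℝ)/2))) ξ := by
    intro ξ
    by_cases hξ : ξ ∈ S
    · rw [Set.indicator_of_mem (hSIcc hξ), hgK ξ, Complex.norm_real, Real.norm_eq_abs,
        hK0_def, _root_.abs_mul]
      calc |φ ξ| * |(D + c*ξ^2) ^ (-(1:ℝ)/2)| ≤ B * (4 * ((D + c) ^ (-(1:ℝ)/2))) :=
            mul_le_mul (hBb0 ξ) (bound_H0 hD hc hξ.1 hξ.2) (abs_nonneg _) hBpos.le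
        _ = 4 * B * ((D + c) ^ (-(1:ℝ)/2)) := by ring
    · have h0 : g ξ = 0 := by
        rw [hgK ξ, hK0_def]; simp [hφ0 ξ hξ]
      rw [h0, norm_zero]
      exact Set.indicator_nonneg (fun _ _ => by positivity) ξ
  have hg1b : ∀ ξ, ‖g1 ξ‖ ≤ Set.indicator (Set.Icc (-4:ℝ) 4)
      (fun _ => 260 * B * ((D + c) ^ (-(1:ℝ)/2))) ξ := by
    intro ξ
    by_cases hξ : ξ ∈ S
    · rw [Set.indicator_of_mem (hSIcc hξ), hg1_def, Complex.norm_real, Real.norm_eq_abs,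
        hK1_def]
      refine (abs_add_le _ _).trans ?_
      rw [_root_.abs_mul, _root_.abs_mul]
      calc |deriv φ ξ| * |(D + c*ξ^2) ^ (-(1:ℝ)/2)|
            + |φ ξ| * |(-(c * ξ) * (D + c*ξ^2) ^ (-(3:ℝ)/2))|
          ≤ B * (4 * ((D + c) ^ (-(1:ℝ)/2))) + B * (256 * ((D + c) ^ (-(1:ℝ)/2))) :=
            add_le_add
              (mul_le_mul (hBb1 ξ) (bound_H0 hD hc hξ.1 hξ.2) (abs_nonneg _) hBpos.le)
              (mul_le_mul (hBb0 ξ) (bound_H1 hD hc hξ.1 hξ.2) (abs_nonneg _) hBpos.le)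
        _ = 260 * B * ((D + c) ^ (-(1:ℝ)/2)) := by ring
    · have h0 : g1 ξ = 0 := by
        rw [hg1_def, hK1_def]; simp [hφ0 ξ hξ, hdφ0 ξ hξ]
      rw [h0, norm_zero]
      exact Set.indicator_nonneg (fun _ _ => by positivity) ξ
  have hg2b : ∀ ξ, ‖g2 ξ‖ ≤ Set.indicator (Set.Icc (-4:ℝ) 4)
      (fun _ => 49732 * B * ((D + c) ^ (-(1:ℝ)/2))) ξ := by
    intro ξ
    by_cases hξ : ξ ∈ S
    · rw [Set.indicator_of_mem (hSIcc hξ), hg2_def, Complex.norm_real, Real.norm_eq_abs,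
        hK2_def]
      have h0 := bound_H0 hD hc hξ.1 hξ.2
      have h1 := bound_H1 hD hc hξ.1 hξ.2
      have h2 := bound_H2 hD hc hξ.1 hξ.2
      have b0 := hBb0 ξ; have b1 := hBb1 ξ; have b2 := hBb2 ξ
      have tA : |deriv (deriv φ) ξ * (D + c * ξ^2) ^ (-(1:ℝ)/2)|
          ≤ B * (4 * ((D + c) ^ (-(1:ℝ)/2))) := by
        rw [_root_.abs_mul]; exact mul_le_mul b2 h0 (abs_nonneg _) hBpos.le
      have tB : |2 * deriv φ ξ * (-(c * ξ) * (D + c * ξ^2) ^ (-(3:ℝ)/2))|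
          ≤ 2 * (B * (256 * ((D + c) ^ (-(1:ℝ)/2)))) := by
        rw [_root_.abs_mul, _root_.abs_mul, _root_.abs_two]
        have := mul_le_mul b1 h1 (abs_nonneg _) hBpos.le
        nlinarith [abs_nonneg (deriv φ ξ),
          abs_nonneg (-(c * ξ) * (D + c * ξ^2) ^ (-(3:ℝ)/2))]
      have tC : |φ ξ * (-c * (D + c * ξ^2) ^ (-(3:ℝ)/2)
            + 3 * c^2 * ξ^2 * (D + c * ξ^2) ^ (-(5:ℝ)/2))|
          ≤ B * (49216 * ((D + c) ^ (-(1:ℝ)/2))) := by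
        rw [_root_.abs_mul]; exact mul_le_mul b0 h2 (abs_nonneg _) hBpos.le
      calc |deriv (deriv φ) ξ * (D + c * ξ^2) ^ (-(1:ℝ)/2)
            + 2 * deriv φ ξ * (-(c * ξ) * (D + c * ξ^2) ^ (-(3:ℝ)/2))
            + φ ξ * (-c * (D + c * ξ^2) ^ (-(3:ℝ)/2)
                + 3 * c^2 * ξ^2 * (D + c * ξ^2) ^ (-(5:ℝ)/2))|
          ≤ |deriv (deriv φ) ξ * (D + c * ξ^2) ^ (-(1:ℝ)/2)|
            + |2 * deriv φ ξ * (-(c * ξ) * (D + c * ξ^2) ^ (-(3:ℝ)/2))|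
            + |φ ξ * (-c * (D + c * ξ^2) ^ (-(3:ℝ)/2)
                + 3 * c^2 * ξ^2 * (D + c * ξ^2) ^ (-(5:ℝ)/2))| := abs_add_three _ _ _
        _ ≤ 49732 * B * ((D + c) ^ (-(1:ℝ)/2)) := by linarith
    · have h0 : g2 ξ = 0 := by
        rw [hg2_def, hK2_def]; simp [hφ0 ξ hξ, hdφ0 ξ hξ, hd2φ0 ξ hξ]
      rw [h0, norm_zero]
      exact Set.indicator_nonneg (fun _ _ => by positivity) ξ
  -- integrability
  have hind : ∀ M : ℝ, Integrable (Set.indicator (Set.Icc (-4:ℝ) 4) (fun _ => M)) volume := by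
    intro M
    rw [integrable_indicator_iff measurableSet_Icc]
    exact integrableOn_const measure_Icc_lt_top.ne
  have hintg : Integrable g :=
    Integrable.mono' (hind _) hdiffg.continuous.aestronglyMeasurable
      (Filter.Eventually.of_forall hgb)
  have hintg1 : Integrable g1 :=
    Integrable.mono' (hind _) hdiffg1.continuous.aestronglyMeasurable
      (Filter.Eventually.of_forall hg1b)
  have hmeasg2 : AEStronglyMeasurable g2 volume := by
    have h : Measurable g2 := by rw [← hderivg1]; exact measurable_deriv g1
    exact h.aestronglyMeasurable
  have hintg2 : Integrable g2 :=
    Integrable.mono' (hind _) hmeasg2 (Filter.Eventually.of_forall hg2b)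
  -- integral bounds
  have hIcc8 : ∀ M : ℝ, ∫ x : ℝ, Set.indicator (Set.Icc (-4:ℝ) 4) (fun _ => M) x = 8 * M := by
    intro M
    rw [integral_indicator_const _ measurableSet_Icc, Real.volume_real_Icc, smul_eq_mul]
    norm_num
  have hIg : ∫ x, ‖g x‖ ≤ 8 * (4 * B * ((D + c) ^ (-(1:ℝ)/2))) := by
    calc ∫ x, ‖g x‖ ≤ ∫ x, Set.indicator (Set.Icc (-4:ℝ) 4)
          (fun _ => 4 * B * ((D + c) ^ (-(1:ℝ)/2))) x :=
          integral_mono hintg.norm (hind _) hgb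
      _ = 8 * (4 * B * ((D + c) ^ (-(1:ℝ)/2))) := hIcc8 _
  have hIg2 : ∫ x, ‖g2 x‖ ≤ 8 * (49732 * B * ((D + c) ^ (-(1:ℝ)/2))) := by
    calc ∫ x, ‖g2 x‖ ≤ ∫ x, Set.indicator (Set.Icc (-4:ℝ) 4)
          (fun _ => 49732 * B * ((D + c) ^ (-(1:ℝ)/2))) x :=
          integral_mono hintg2.norm (hind _) hg2b
      _ = 8 * (49732 * B * ((D + c) ^ (-(1:ℝ)/2))) := hIcc8 _
  -- Fourier transform bounds
  have hFb : ∀ x : ℝ, ‖𝓕 g x‖ ≤ 32 * B * ((D + c) ^ (-(1:ℝ)/2)) := by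
    intro x
    refine (VectorFourier.norm_fourierIntegral_le_integral_norm _ _ _ _ _).trans ?_
    linarith [hIg]
  have hintdg : Integrable (deriv g) := by rw [hderivg]; exact hintg1
  have hdiffdg : Differentiable ℝ (deriv g) := by rw [hderivg]; exact hdiffg1
  have hintddg : Integrable (deriv (deriv g)) := by rw [hderivg, hderivg1]; exact hintg2
  have hFb2 : ∀ x : ℝ, 4 * π^2 * x^2 * ‖𝓕 g x‖ ≤ 397856 * B * ((D + c) ^ (-(1:ℝ)/2)) := by
    intro x
    have e1 : 𝓕 g2 x = ((2*π*Complex.I*x) * (2*π*Complex.I*x)) • 𝓕 g x := by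
      calc 𝓕 g2 x = 𝓕 (deriv (deriv g)) x := by rw [hderivg, hderivg1]
        _ = (2*π*Complex.I*x) • 𝓕 (deriv g) x := by
            rw [Real.fourier_deriv hintdg hdiffdg hintddg]
        _ = (2*π*Complex.I*x) • ((2*π*Complex.I*x) • 𝓕 g x) := by
            rw [Real.fourier_deriv hintg hdiffg hintdg]
        _ = ((2*π*Complex.I*x) * (2*π*Complex.I*x)) • 𝓕 g x := smul_smul _ _ _
    have e2 : ‖𝓕 g2 x‖ = (4 * π^2 * x^2) * ‖𝓕 g x‖ := by
      rw [e1, norm_smul, norm_mul]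
      have e3 : ‖(2*π*Complex.I*(x:ℂ))‖ = 2 * π * |x| := by
        simp [abs_of_pos Real.pi_pos]
      rw [e3, show (2*π*|x|) * (2*π*|x|) = 4*π^2*|x|^2 by ring, _root_.sq_abs]
    calc 4 * π^2 * x^2 * ‖𝓕 g x‖ = ‖𝓕 g2 x‖ := e2.symm
      _ ≤ ∫ ξ, ‖g2 ξ‖ := VectorFourier.norm_fourierIntegral_le_integral_norm _ _ _ _ _
      _ ≤ 397856 * B * ((D + c) ^ (-(1:ℝ)/2)) := by linarith [hIg2]
  -- pointwise decay of the inverse transform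
  have hpt : ∀ x : ℝ, ‖𝓕⁻ g x‖
      ≤ (397888 * B * ((D + c) ^ (-(1:ℝ)/2))) * (1 + x^2)⁻¹ := by
    intro x
    rw [Real.fourierInv_eq_fourier_neg]
    have h1x : (0:ℝ) < 1 + x^2 := by positivity
    rw [← div_eq_mul_inv, le_div_iff₀ h1x]
    have k1 := hFb (-x)
    have k2 := hFb2 (-x)
    have hπ : (3:ℝ) < π := Real.pi_gt_three
    have hnn := norm_nonneg (𝓕 g (-x))
    rw [neg_sq] at k2
    have h4π : (1:ℝ) ≤ 4*π^2 := by nlinarith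
    have hstep : x^2*‖𝓕 g (-x)‖ ≤ 4*π^2*x^2*‖𝓕 g (-x)‖ := by
      nlinarith [mul_nonneg (sq_nonneg x) hnn]
    nlinarith [k1, k2, hstep]
  -- conclude
  calc ∫⁻ x : ℝ, ‖𝓕⁻ g x‖₊
      ≤ ∫⁻ x : ℝ, ENNReal.ofReal
          ((397888 * B * ((D + c) ^ (-(1:ℝ)/2))) * (1 + x^2)⁻¹) := by
        refine lintegral_mono fun x => ?_
        rw [← ENNReal.ofReal_coe_nnreal, coe_nnnorm]
        exact ENNReal.ofReal_le_ofReal (hpt x)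
    _ = ENNReal.ofReal (∫ x : ℝ, (397888 * B * ((D + c) ^ (-(1:ℝ)/2))) * (1 + x^2)⁻¹) := by
        rw [MeasureTheory.ofReal_integral_eq_lintegral_ofReal
          (integrable_inv_one_add_sq.const_mul _)
          (Filter.Eventually.of_forall (fun x => by positivity))]
    _ = ENNReal.ofReal ((397888 * B * ((D + c) ^ (-(1:ℝ)/2))) * π) := by
        rw [integral_const_mul, integral_univ_inv_one_add_sq]
    _ = ENNReal.ofReal ((397888 * B * π) * (D + c) ^ (-(1:ℝ)/2)) := by
        ring_nf

end Statement4Aux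

open Statement4Aux in
/-- kernel estimate
`∫ |𝓕⁻¹[φ̃(ξ)(α² + 2^{2j}ξ²)^{-1/2}](x)| dx ≤ C (α² + 2^{2j})^{-1/2}`
for any smooth `φ̃` with compact support in `{1/4 ≤ |ξ| ≤ 4}`. -/
theorem statement4 (φtil : ℝ → ℝ)
    (hφ_smooth : ContDiff ℝ (⊤ : ℕ∞) φtil)
    (hφ_supp : Function.support φtil ⊆ {ξ : ℝ | 1/4 ≤ |ξ| ∧ |ξ| ≤ 4}) :
    ∃ C : ℝ, 0 < C ∧ ∀ (α : ℝ) (j : ℤ),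
      ∫⁻ x : ℝ, ‖𝓕⁻ (fun ξ : ℝ =>
          ((φtil ξ * (α ^ 2 + (2:ℝ) ^ (2 * j) * ξ ^ 2) ^ (-(1:ℝ)/2) : ℝ) : ℂ)) x‖₊
        ≤ ENNReal.ofReal (C * (α ^ 2 + (2:ℝ) ^ (2 * j)) ^ (-(1:ℝ)/2)) := by
  have hS_closed : IsClosed {ξ : ℝ | 1/4 ≤ |ξ| ∧ |ξ| ≤ 4} :=
    (isClosed_le continuous_const _root_.continuous_abs).inter
      (isClosed_le _root_.continuous_abs continuous_const)
  have hSIcc : {ξ : ℝ | 1/4 ≤ |ξ| ∧ |ξ| ≤ 4} ⊆ Set.Icc (-4:ℝ) 4 :=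
    fun ξ hξ => Set.mem_Icc.mpr (abs_le.mp hξ.2)
  have hts : tsupport φtil ⊆ {ξ : ℝ | 1/4 ≤ |ξ| ∧ |ξ| ≤ 4} :=
    closure_minimal hφ_supp hS_closed
  have hone : (1 : WithTop ℕ∞) ≤ ((⊤:ℕ∞):WithTop ℕ∞) := by
    exact_mod_cast (le_top : (1:ℕ∞) ≤ ⊤)
  have hsm' : ContDiff ℝ (((⊤:ℕ∞)):WithTop ℕ∞) φtil := hφ_smooth.of_le (by simp)
  have hdφ_smooth : ContDiff ℝ (((⊤:ℕ∞)):WithTop ℕ∞) (deriv φtil) :=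
    (contDiff_infty_iff_deriv.mp hsm').2
  have hd2φ_smooth : ContDiff ℝ (((⊤:ℕ∞)):WithTop ℕ∞) (deriv (deriv φtil)) :=
    (contDiff_infty_iff_deriv.mp hdφ_smooth).2
  have hφ0 : ∀ ξ, ξ ∉ {ξ : ℝ | 1/4 ≤ |ξ| ∧ |ξ| ≤ 4} → φtil ξ = 0 := fun ξ hξ => by
    by_contra h; exact hξ (hφ_supp (Function.mem_support.mpr h))
  have hdφ0 : ∀ ξ, ξ ∉ {ξ : ℝ | 1/4 ≤ |ξ| ∧ |ξ| ≤ 4} → deriv φtil ξ = 0 := fun ξ hξ => by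
    by_contra h; exact hξ (hts (support_deriv_subset (Function.mem_support.mpr h)))
  have hts' : tsupport (deriv φtil) ⊆ {ξ : ℝ | 1/4 ≤ |ξ| ∧ |ξ| ≤ 4} :=
    closure_minimal (fun ξ h => hts (support_deriv_subset h)) hS_closed
  have hd2φ0 : ∀ ξ, ξ ∉ {ξ : ℝ | 1/4 ≤ |ξ| ∧ |ξ| ≤ 4} → deriv (deriv φtil) ξ = 0 :=
    fun ξ hξ => by
      by_contra h; exact hξ (hts' (support_deriv_subset (Function.mem_support.mpr h)))
  obtain ⟨B₀, hB₀⟩ := (isCompact_Icc : IsCompact (Set.Icc (-4:ℝ) 4)).exists_bound_of_continuousOn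
    hsm'.continuous.continuousOn
  obtain ⟨B₁, hB₁⟩ := (isCompact_Icc : IsCompact (Set.Icc (-4:ℝ) 4)).exists_bound_of_continuousOn
    hdφ_smooth.continuous.continuousOn
  obtain ⟨B₂, hB₂⟩ := (isCompact_Icc : IsCompact (Set.Icc (-4:ℝ) 4)).exists_bound_of_continuousOn
    hd2φ_smooth.continuous.continuousOn
  set B : ℝ := max (max B₀ B₁) (max B₂ 1) with hB_def
  have hB1 : 1 ≤ B := le_max_of_le_right (le_max_right _ _)
  have bound_of : ∀ (f : ℝ → ℝ) (Bf : ℝ), (∀ x ∈ Set.Icc (-4:ℝ) 4, ‖f x‖ ≤ Bf) →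
      (∀ ξ, ξ ∉ {ξ : ℝ | 1/4 ≤ |ξ| ∧ |ξ| ≤ 4} → f ξ = 0) → Bf ≤ B → ∀ ξ, |f ξ| ≤ B := by
    intro f Bf hf hf0 hfB ξ
    by_cases hξ : ξ ∈ Set.Icc (-4:ℝ) 4
    · exact le_trans (by simpa [Real.norm_eq_abs] using hf ξ hξ) hfB
    · rw [hf0 ξ (fun hS => hξ (hSIcc hS))]
      simp only [abs_zero]
      linarith
  have hBb0 : ∀ ξ, |φtil ξ| ≤ B :=
    bound_of _ B₀ hB₀ hφ0 (le_max_of_le_left (le_max_left _ _))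
  have hBb1 : ∀ ξ, |deriv φtil ξ| ≤ B :=
    bound_of _ B₁ hB₁ hdφ0 (le_max_of_le_left (le_max_right _ _))
  have hBb2 : ∀ ξ, |deriv (deriv φtil) ξ| ≤ B :=
    bound_of _ B₂ hB₂ hd2φ0 (le_max_of_le_right (le_max_left _ _))
  refine ⟨397888 * B * π, by positivity, fun α j => ?_⟩
  exact main_est φtil hφ_smooth hφ_supp B hB1 hBb0 hBb1 hBb2 (α ^ 2) ((2:ℝ) ^ (2 * j))
    (sq_nonneg α) (zpow_pos (by norm_num) _)
end
end

section
/- There exists a constant C > 0 such that for every α > 0, every j ∈ ℤ, and every ξ ∈ ℝ with 1/4 ≤ |ξ| ≤ 4: the functions t ↦ λ₊(α, 2^j·t) and t ↦ λ₋(α, 2^j·t) are differentiable at ξ with derivatives 2·2^{2j}·ξ·(α² + 4·2^{2j}·ξ²)^(−1/2) and −2·2^{2j}·ξ·(α² + 4·2^{2j}·ξ²)^(−1/2) respectively, and the common absolute value satisfies 2·2^{2j}·|ξ|·(α² + 4·2^{2j}·ξ²)^(−1/2) ≤ C·(−λ₋(α,2^j)) ≤ C·λ₊(α,2^j). -/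
noncomputable section

/-- `λ₊(α,ξ) = (α + √(α² + 4ξ²))/2`. -/
def lamP (α ξ : ℝ) : ℝ := (α + Real.sqrt (α ^ 2 + 4 * ξ ^ 2)) / 2

/-- `λ₋(α,ξ) = (α − √(α² + 4ξ²))/2`. -/
def lamM (α ξ : ℝ) : ℝ := (α - Real.sqrt (α ^ 2 + 4 * ξ ^ 2)) / 2

/-- there is `C > 0` such that for every `α > 0`, `j ∈ ℤ` and
`ξ` with `1/4 ≤ |ξ| ≤ 4`, the maps `t ↦ λ±(α, 2^j t)` are differentiable at `ξ`
with derivatives `± 2·2^{2j} ξ (α² + 4·2^{2j} ξ²)^{-1/2}`, and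
`2·2^{2j} |ξ| (α² + 4·2^{2j} ξ²)^{-1/2} ≤ C (−λ₋(α,2^j)) ≤ C λ₊(α,2^j)`. -/
theorem statement9 :
    ∃ C : ℝ, 0 < C ∧ ∀ (α : ℝ), 0 < α → ∀ (j : ℤ) (ξ : ℝ),
      1/4 ≤ |ξ| → |ξ| ≤ 4 →
      HasDerivAt (fun t : ℝ => lamP α ((2:ℝ) ^ j * t))
        (2 * (2:ℝ) ^ (2 * j) * ξ *
          (α ^ 2 + 4 * (2:ℝ) ^ (2 * j) * ξ ^ 2) ^ (-(1:ℝ)/2)) ξ ∧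
      HasDerivAt (fun t : ℝ => lamM α ((2:ℝ) ^ j * t))
        (-(2 * (2:ℝ) ^ (2 * j) * ξ *
          (α ^ 2 + 4 * (2:ℝ) ^ (2 * j) * ξ ^ 2) ^ (-(1:ℝ)/2))) ξ ∧
      2 * (2:ℝ) ^ (2 * j) * |ξ| *
          (α ^ 2 + 4 * (2:ℝ) ^ (2 * j) * ξ ^ 2) ^ (-(1:ℝ)/2)
        ≤ C * (-lamM α ((2:ℝ) ^ j)) ∧
      C * (-lamM α ((2:ℝ) ^ j)) ≤ C * lamP α ((2:ℝ) ^ j) := by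
  refine ⟨32, by norm_num, ?_⟩
  intro α hα j ξ hξ1 hξ2
  set a : ℝ := (2:ℝ) ^ j with ha_def
  have ha : 0 < a := by positivity
  have h2j : (2:ℝ) ^ (2 * j) = a ^ 2 := by
    rw [two_mul, zpow_add₀ (by norm_num : (2:ℝ) ≠ 0), sq]
  set X : ℝ := α ^ 2 + 4 * a ^ 2 * ξ ^ 2 with hX_def
  have hX : 0 < X := by positivity
  have hXg : α ^ 2 + 4 * (a * ξ) ^ 2 = X := by rw [hX_def]; ring
  have hT0 : 0 < Real.sqrt X := Real.sqrt_pos.2 hX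
  have hrpow : X ^ (-(1:ℝ)/2) = (Real.sqrt X)⁻¹ := by
    rw [show (-(1:ℝ)/2) = -(1/2) by norm_num, Real.rpow_neg hX.le,
      Real.sqrt_eq_rpow]
  have h1 : HasDerivAt (fun t : ℝ => a * t) a ξ := by
    simpa using (hasDerivAt_id ξ).const_mul a
  have hg : HasDerivAt (fun t : ℝ => α ^ 2 + 4 * (a * t) ^ 2)
      (4 * (2 * (a * ξ) ^ 1 * a)) ξ := by
    simpa using ((h1.pow 2).const_mul 4).const_add (α ^ 2)
  have hs : HasDerivAt (fun t : ℝ => Real.sqrt (α ^ 2 + 4 * (a * t) ^ 2))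
      (1 / (2 * Real.sqrt X) * (4 * (2 * (a * ξ) ^ 1 * a))) ξ := by
    have := (Real.hasDerivAt_sqrt (x := α ^ 2 + 4 * (a * ξ) ^ 2)
      (by rw [hXg]; exact hX.ne')).comp ξ hg
    simpa [hXg, Function.comp_def] using this
  have hval : (1 / (2 * Real.sqrt X) * (4 * (2 * (a * ξ) ^ 1 * a))) / 2
      = 2 * (2:ℝ) ^ (2 * j) * ξ *
        (α ^ 2 + 4 * (2:ℝ) ^ (2 * j) * ξ ^ 2) ^ (-(1:ℝ)/2) := by
    rw [h2j, ← hX_def, hrpow]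
    field_simp
    ring
  refine ⟨?_, ?_, ?_, ?_⟩
  · have h := (hs.const_add α).div_const 2
    rw [hval] at h
    exact h
  · have h := ((hasDerivAt_const ξ α).sub hs).div_const 2
    have e : (0 - 1 / (2 * Real.sqrt X) * (4 * (2 * (a * ξ) ^ 1 * a))) / 2
        = -((1 / (2 * Real.sqrt X) * (4 * (2 * (a * ξ) ^ 1 * a))) / 2) := by
      ring
    rw [e, hval] at h
    exact h
  · rw [h2j, ← hX_def, hrpow]
    simp only [lamM]
    set S := Real.sqrt (α ^ 2 + 4 * a ^ 2) with hSdef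
    have hSsq : S ^ 2 = α ^ 2 + 4 * a ^ 2 := Real.sq_sqrt (by positivity)
    have hS0 : 0 < S := Real.sqrt_pos.2 (by positivity)
    have hTsq : (Real.sqrt X) ^ 2 = X := Real.sq_sqrt hX.le
    have hSα : α ≤ S := by
      have h := Real.sqrt_le_sqrt (show α ^ 2 ≤ α ^ 2 + 4 * a ^ 2 by nlinarith)
      rwa [Real.sqrt_sq hα.le] at h
    have hx : 1/16 ≤ ξ ^ 2 := by nlinarith [sq_abs ξ]
    have h16 : α ^ 2 + 4 * a ^ 2 ≤ (4 * Real.sqrt X) ^ 2 := by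
      rw [mul_pow, Real.sq_sqrt hX.le, hX_def]
      nlinarith [mul_pos ha ha]
    have hST : S ≤ 4 * Real.sqrt X :=
      (Real.sqrt_le_sqrt h16).trans_eq (Real.sqrt_sq (by positivity))
    rw [show 2 * a ^ 2 * |ξ| * (Real.sqrt X)⁻¹
        = (2 * a ^ 2 * |ξ|) / (Real.sqrt X) from by ring,
      div_le_iff₀ hT0]
    nlinarith [mul_nonneg (sub_nonneg.2 hSα) (sub_nonneg.2 hST),
      sq_nonneg (S - α), mul_nonneg (sq_nonneg a) (sub_nonneg.2 hξ2),
      mul_pos ha ha, hT0.le]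
  · simp only [lamP, lamM]
    linarith [Real.sqrt_nonneg (α ^ 2 + 4 * a ^ 2)]
end
end
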